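/- Let a < b be real numbers, let 0 < α < 1, let f : ℝ → ℝ be continuously differentiable on an open set containing [a, b], and let x ∈ (a, b). Then the function y ↦ (1/Γ(1−α)) ∫_a^y (y − z)^{−α} (f(z) − f(a)) dz is differentiable at x with derivative (1/Γ(1−α)) ∫_a^x (x − z)^{−α} f′(z) dz. (That is, the Riemann–Liouville fractional derivative of order α of the reduced function f − f(a) — whose limit as x → a⁺ defines the local fractional derivative of f at a — equals the Caputo fractional derivative of f of order α.) -/

import Mathlib

open Real MeasureTheory intervalIntegral

/-!
Substituting `z = a + (y - a) t` turns the Riemann–Liouville integral into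
`(y - a)^(1-α) φ(y)` with `φ(y) = ∫₀¹ (1 - t)^(-α) (f(a + (y - a) t) - f a) dt`. The singularity
of the kernel no longer moves with `y`, so `φ` may be differentiated under the integral sign
(the `y`-derivative of the integrand is dominated by `M (1 - t)^(-α)`). In the product rule,
integration by parts turns `(1 - α) (x - a)^(-α) φ(x)` into `(x - a)^(1-α) ∫₀¹ (1 - t)^(1-α) f'`;
the boundary terms vanish because `f - f a` is zero at `t = 0` and `(1 - t)^(1-α)` at `t = 1`.
Since `(1 - t)^(1-α) + t (1 - t)^(-α) = (1 - t)^(-α)`, the two terms add up to the rescaled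
Caputo integral.
-/

open Set Filter Topology Interval

theorem intervalIntegrable_sub_rpow {p : ℝ} (hp : -1 < p) (a b : ℝ) :
    IntervalIntegrable (fun z => (b - z) ^ p) volume a b := by
  simpa using (intervalIntegrable_rpow' hp (a := b - a) (b := 0)).comp_sub_left b

theorem integral_sub_rpow_mul_eq_rescaled (α : ℝ) (g : ℝ → ℝ) {a y : ℝ} (hy : a < y) :
    ∫ z in a..y, (y - z) ^ (-α) * g z
      = (y - a) ^ (1 - α) * ∫ t in (0 : ℝ)..1, (1 - t) ^ (-α) * g (a + (y - a) * t) := by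
  have hya : 0 < y - a := sub_pos.2 hy
  have hsubst :=
    integral_comp_add_mul (a := 0) (b := 1) (fun z => (y - z) ^ (-α) * g z) hya.ne' a
  simp only [mul_zero, add_zero, mul_one, add_sub_cancel, smul_eq_mul] at hsubst
  have hscale : ∫ t in (0 : ℝ)..1, (y - (a + (y - a) * t)) ^ (-α) * g (a + (y - a) * t)
      = (y - a) ^ (-α) * ∫ t in (0 : ℝ)..1, (1 - t) ^ (-α) * g (a + (y - a) * t) := by
    rw [← intervalIntegral.integral_const_mul]
    refine integral_congr fun t ht => ?_
    rw [uIcc_of_le zero_le_one] at ht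
    rw [show y - (a + (y - a) * t) = (y - a) * (1 - t) by ring,
      mul_rpow hya.le (sub_nonneg.2 ht.2), mul_assoc]
  rw [hscale, eq_inv_mul_iff_mul_eq₀ hya.ne'] at hsubst
  rw [← hsubst, ← mul_assoc, mul_comm (y - a), ← rpow_add_one hya.ne', neg_add_eq_sub]

theorem one_sub_mul_integral_sub_rpow_mul_sub_eq {g g' : ℝ → ℝ} {a b α : ℝ} (hα : α < 1)
    (hgc : ContinuousOn g (uIcc a b))
    (hg : ∀ z ∈ Ioo (min a b) (max a b), HasDerivAt g (g' z) z)
    (hg' : IntervalIntegrable g' volume a b) :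
    (1 - α) * ∫ z in a..b, (b - z) ^ (-α) * (g z - g a)
      = ∫ z in a..b, (b - z) ^ (1 - α) * g' z := by
  have h1α : 0 < 1 - α := sub_pos.2 hα
  have hv : ∀ z ∈ Ioo (min a b) (max a b),
      HasDerivAt (fun z => -(b - z) ^ (1 - α)) ((1 - α) * (b - z) ^ (-α)) z := by
    intro z hz
    have hbz : b - z ≠ 0 := sub_ne_zero.2 <| by
      rintro rfl
      simp only [mem_Ioo, min_lt_iff, lt_max_iff, lt_self_iff_false, or_false] at hz
      linarith
    refine (((hasDerivAt_id' z).const_sub b).rpow_const (Or.inl hbz)).neg.congr_deriv ?_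
    rw [sub_sub_cancel_left]
    ring
  have hparts := integral_mul_deriv_eq_deriv_mul_of_hasDerivAt
    (u := fun z => g z - g a) (v := fun z => -(b - z) ^ (1 - α))
    (hgc.sub continuousOn_const)
    ((continuous_const.sub continuous_id).rpow_const (fun _ => Or.inr h1α.le)).neg.continuousOn
    (fun z hz => (hg z hz).sub_const (g a)) hv hg'
    ((intervalIntegrable_sub_rpow (by linarith) a b).const_mul (1 - α))
  simp only [sub_self, zero_rpow h1α.ne', neg_zero, mul_zero, zero_mul, zero_sub,
    ← intervalIntegral.integral_neg, mul_neg, neg_neg] at hparts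
  rw [← intervalIntegral.integral_const_mul]
  calc _ = ∫ z in a..b, (g z - g a) * ((1 - α) * (b - z) ^ (-α)) :=
        integral_congr fun z _ => by ring
    _ = _ := hparts.trans (integral_congr fun z _ => mul_comm _ _)

theorem integral_one_sub_rpow_mul_eq_add {h : ℝ → ℝ} {α : ℝ} (hα : α < 1)
    (hh : ContinuousOn h (uIcc 0 1)) :
    ∫ t in (0 : ℝ)..1, (1 - t) ^ (-α) * h t
      = (∫ t in (0 : ℝ)..1, (1 - t) ^ (1 - α) * h t)
        + ∫ t in (0 : ℝ)..1, (1 - t) ^ (-α) * (h t * t) := by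
  have hv : Continuous fun t : ℝ => (1 - t) ^ (1 - α) :=
    (continuous_const.sub continuous_id).rpow_const fun _ => Or.inr (by linarith)
  rw [← integral_add (f := fun t => (1 - t) ^ (1 - α) * h t)
    (g := fun t => (1 - t) ^ (-α) * (h t * t))
    (hv.continuousOn.mul hh).intervalIntegrable
    ((intervalIntegrable_sub_rpow (by linarith) 0 1).mul_continuousOn (hh.mul continuousOn_id))]
  refine integral_congr fun t ht => ?_
  rw [uIcc_of_le zero_le_one] at ht
  rw [sub_eq_neg_add 1 α, rpow_add_one' (sub_nonneg.2 ht.2) (by linarith)]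
  ring

theorem add_sub_mul_mem_Icc {a b y t : ℝ} (hy : y ∈ Icc a b) (ht : t ∈ Icc (0 : ℝ) 1) :
    a + (y - a) * t ∈ Icc a b :=
  ⟨by nlinarith [hy.1, ht.1], by nlinarith [hy.1, hy.2, ht.1, ht.2]⟩

theorem ContinuousOn.comp_add_sub_mul {g : ℝ → ℝ} {a b y : ℝ} (hg : ContinuousOn g (Icc a b))
    (hy : y ∈ Icc a b) : ContinuousOn (fun t => g (a + (y - a) * t)) (Icc 0 1) :=
  hg.comp (by fun_prop) fun _ ht => add_sub_mul_mem_Icc hy ht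

theorem hasDerivAt_integral_mul_comp_add_sub_mul {k g g' : ℝ → ℝ} {a b x : ℝ}
    (hk : IntervalIntegrable k volume 0 1) (hg : ∀ z ∈ Icc a b, HasDerivAt g (g' z) z)
    (hg' : ContinuousOn g' (Icc a b)) (hx : x ∈ Ioo a b) :
    HasDerivAt (fun y => ∫ t in (0 : ℝ)..1, k t * g (a + (y - a) * t))
      (∫ t in (0 : ℝ)..1, k t * (g' (a + (x - a) * t) * t)) x := by
  have hgc : ContinuousOn g (Icc a b) := HasDerivAt.continuousOn hg
  have hI : Ι (0 : ℝ) 1 ⊆ Icc 0 1 := uIoc_subset_uIcc.trans (uIcc_of_le zero_le_one).subset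
  have hkm : AEStronglyMeasurable k (volume.restrict (Ι 0 1)) := hk.def'.aestronglyMeasurable
  obtain ⟨M, hM⟩ := isCompact_Icc.exists_bound_of_continuousOn hg'
  refine (hasDerivAt_integral_of_dominated_loc_of_deriv_le
    (F := fun y t => k t * g (a + (y - a) * t))
    (F' := fun y t => k t * (g' (a + (y - a) * t) * t))
    (bound := fun t => ‖k t‖ * M)
    (Ioo_mem_nhds hx.1 hx.2) ?_ ?_ ?_ ?_ (hk.norm.mul_const M) ?_).2
  · filter_upwards [Ioo_mem_nhds hx.1 hx.2] with y hy
    exact hkm.mul (((hgc.comp_add_sub_mul (Ioo_subset_Icc_self hy)).mono hI).aestronglyMeasurable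
      measurableSet_uIoc)
  · refine hk.mul_continuousOn ?_
    rw [uIcc_of_le zero_le_one]
    exact hgc.comp_add_sub_mul (Ioo_subset_Icc_self hx)
  · exact hkm.mul ((((hg'.comp_add_sub_mul (Ioo_subset_Icc_self hx)).mul continuousOn_id).mono
      hI).aestronglyMeasurable measurableSet_uIoc)
  · refine ae_of_all _ fun t ht y hy => ?_
    have ht' : t ∈ Icc (0 : ℝ) 1 := hI ht
    rw [norm_mul, norm_mul, Real.norm_of_nonneg ht'.1]
    gcongr
    have hbound := hM _ (add_sub_mul_mem_Icc (Ioo_subset_Icc_self hy) ht')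
    simpa using mul_le_mul hbound ht'.2 ht'.1 ((norm_nonneg _).trans hbound)
  · refine ae_of_all _ fun t ht y hy => ?_
    have haff : HasDerivAt (fun y => a + (y - a) * t) t y := by
      simpa using (((hasDerivAt_id y).sub_const a).mul_const t).const_add a
    exact ((hg _ (add_sub_mul_mem_Icc (Ioo_subset_Icc_self hy) (hI ht))).comp y haff).const_mul _

theorem hasDerivAt_rpow_mul_integral_comp_add_sub_mul {g g' : ℝ → ℝ} {a b x α : ℝ}
    (hα : α < 1) (hg : ∀ z ∈ Icc a b, HasDerivAt g (g' z) z) (hg' : ContinuousOn g' (Icc a b))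
    (hx : x ∈ Ioo a b) :
    HasDerivAt
      (fun y => (y - a) ^ (1 - α) *
        ∫ t in (0 : ℝ)..1, (1 - t) ^ (-α) * (g (a + (y - a) * t) - g a))
      ((x - a) ^ (1 - α) * ∫ t in (0 : ℝ)..1, (1 - t) ^ (-α) * g' (a + (x - a) * t)) x := by
  have hxa : 0 < x - a := sub_pos.2 hx.1
  have hx' : x ∈ Icc a b := Ioo_subset_Icc_self hx
  have hk : IntervalIntegrable (fun t : ℝ => (1 - t) ^ (-α)) volume 0 1 :=
    intervalIntegrable_sub_rpow (by linarith) 0 1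
  have hg'x : ContinuousOn (fun t => g' (a + (x - a) * t)) (uIcc 0 1) := by
    rw [uIcc_of_le zero_le_one]
    exact hg'.comp_add_sub_mul hx'
  have hpow : HasDerivAt (fun y => (y - a) ^ (1 - α)) ((1 - α) * (x - a) ^ (-α)) x := by
    refine (((hasDerivAt_id' x).sub_const a).rpow_const (Or.inl hxa.ne')).congr_deriv ?_
    rw [sub_sub_cancel_left, one_mul]
  have hφ := hasDerivAt_integral_mul_comp_add_sub_mul hk
    (fun z hz => (hg z hz).sub_const (g a)) hg' hx
  have hparts := one_sub_mul_integral_sub_rpow_mul_sub_eq (a := 0) (b := 1)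
    (g := fun t => g (a + (x - a) * t)) (g' := fun t => g' (a + (x - a) * t) * (x - a)) hα
    ?cont ?deriv (hg'x.mul continuousOn_const).intervalIntegrable
  case cont =>
    rw [uIcc_of_le zero_le_one]
    exact (HasDerivAt.continuousOn hg).comp_add_sub_mul hx'
  case deriv =>
    intro t ht
    have haff : HasDerivAt (fun t => a + (x - a) * t) (x - a) t := by
      simpa using ((hasDerivAt_id t).const_mul (x - a)).const_add a
    rw [min_eq_left zero_le_one, max_eq_right zero_le_one] at ht
    exact (hg _ (add_sub_mul_mem_Icc hx' (Ioo_subset_Icc_self ht))).comp t haff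
  simp only [mul_zero, add_zero, ← mul_assoc, intervalIntegral.integral_mul_const] at hparts
  refine (hpow.mul hφ).congr_deriv ?_
  have hrpow : (x - a) ^ (1 - α) = (x - a) ^ (-α) * (x - a) := by
    rw [sub_eq_neg_add 1 α, rpow_add_one hxa.ne']
  rw [integral_one_sub_rpow_mul_eq_add hα hg'x]
  linear_combination (x - a) ^ (-α) * hparts
    - (∫ t in (0 : ℝ)..1, (1 - t) ^ (1 - α) * g' (a + (x - a) * t)) * hrpow

theorem rl_of_reduced_eq_caputo_general (a b : ℝ) (α : ℝ)
    (hα2 : α < 1) (f : ℝ → ℝ) (s : Set ℝ)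
    (hs : IsOpen s) (hsub : Set.Icc a b ⊆ s) (hf : ContDiffOn ℝ 1 f s)
    (x : ℝ) (hx : x ∈ Set.Ioo a b) :
    HasDerivAt
      (fun y : ℝ => (1 / Real.Gamma (1 - α)) * ∫ z in a..y, (y - z) ^ (-α) * (f z - f a))
      ((1 / Real.Gamma (1 - α)) * ∫ z in a..x, (x - z) ^ (-α) * deriv f z) x := by
  have hderiv : ∀ z ∈ Icc a b, HasDerivAt f (deriv f z) z := fun z hz =>
    ((hf.differentiableOn one_ne_zero).differentiableAt (hs.mem_nhds (hsub hz))).hasDerivAt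
  have hcont : ContinuousOn (deriv f) (Icc a b) :=
    (hf.continuousOn_deriv_of_isOpen hs le_rfl).mono hsub
  have hrescale : (fun y => ∫ z in a..y, (y - z) ^ (-α) * (f z - f a)) =ᶠ[𝓝 x]
      fun y => (y - a) ^ (1 - α) *
        ∫ t in (0 : ℝ)..1, (1 - t) ^ (-α) * (f (a + (y - a) * t) - f a) := by
    filter_upwards [Ioi_mem_nhds hx.1] with y hy using integral_sub_rpow_mul_eq_rescaled α _ hy
  rw [integral_sub_rpow_mul_eq_rescaled α _ hx.1]
  exact ((hasDerivAt_rpow_mul_integral_comp_add_sub_mul hα2 hderiv hcont hx).congr_of_eventuallyEq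
    hrescale).const_mul _

theorem rl_of_reduced_eq_caputo (a b : ℝ) (hab : a < b) (α : ℝ)
    (hα1 : 0 < α) (hα2 : α < 1) (f : ℝ → ℝ) (s : Set ℝ)
    (hs : IsOpen s) (hsub : Set.Icc a b ⊆ s) (hf : ContDiffOn ℝ 1 f s)
    (x : ℝ) (hx : x ∈ Set.Ioo a b) :
    HasDerivAt
      (fun y : ℝ => (1 / Real.Gamma (1 - α)) * ∫ z in a..y, (y - z) ^ (-α) * (f z - f a))
      ((1 / Real.Gamma (1 - α)) * ∫ z in a..x, (x - z) ^ (-α) * deriv f z) x :=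
  rl_of_reduced_eq_caputo_general a b α hα2 f s hs hsub hf x hx
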